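/- With the operators of the type-B₂ positive representation for w₀ = s₁s₂s₁s₂ defined in the context, for all i, j ∈ {1,2} the following operator identities hold on the space of all functions ℂ⁴ → ℂ: K_i ∘ e_j = q_i^{a_ij} · e_j ∘ K_i and K_i ∘ f_j = q_i^{−a_ij} · f_j ∘ K_i, where q₁ = q_s, q₂ = q and (a_ij) is the B₂ Cartan matrix a₁₁ = a₂₂ = 2, a₁₂ = −2, a₂₁ = −1. -/
import Mathlib


noncomputable section

open Complex

/-- The space of operators on all functions `ℂ⁴ → ℂ`. -/
abbrev OpB : Type := Module.End ℂ ((Fin 4 → ℂ) → ℂ)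

/-- Weyl operator `W(ℓ,δ)`: `(W(ℓ,δ) f)(x) = exp(ℓ(x + δ/2)) · f(x + δ)`. -/
def Wop (ℓ : (Fin 4 → ℂ) → ℂ) (δ : Fin 4 → ℂ) : OpB where
  toFun f := fun x => Complex.exp (ℓ (x + (2 : ℂ)⁻¹ • δ)) * f (x + δ)
  map_add' f g := by funext x; simp [mul_add]
  map_smul' c f := by funext x; simp [smul_eq_mul]; ring

/-- `b_s = b/√2`. -/
def bs (b : ℝ) : ℝ := b / Real.sqrt 2

/-- `q = exp(π i b²)`. -/
def qq (b : ℝ) : ℂ := Complex.exp ((Real.pi : ℂ) * Complex.I * (b : ℂ) ^ 2)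

/-- `q_s = exp(π i b_s²)`. -/
def qs (b : ℝ) : ℂ := Complex.exp ((Real.pi : ℂ) * Complex.I * ((bs b : ℝ) : ℂ) ^ 2)

/-- The affine functional `ℓ_α = π (b_s (ct·t + cv·v + cl1·λ₁) + b (cu·u + cw·w + cl2·λ₂))`,
where `(t,u,v,w) = (x 0, x 1, x 2, x 3)`. -/
def ellB (b lam1 lam2 ct cu cv cw cl1 cl2 : ℝ) : (Fin 4 → ℂ) → ℂ := fun x =>
  (Real.pi : ℂ) * (((bs b : ℝ) : ℂ) * (ct * x 0 + cv * x 2 + cl1 * lam1)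
    + (b : ℂ) * (cu * x 1 + cw * x 3 + cl2 * lam2))

/-- The shift vector `δ = (−i b_s d_t, −i b d_u, −i b_s d_v, −i b d_w)`. -/
def deltaB (b dt du dv dw : ℝ) : Fin 4 → ℂ :=
  ![-Complex.I * ((bs b : ℝ) : ℂ) * dt, -Complex.I * (b : ℂ) * du,
    -Complex.I * ((bs b : ℝ) : ℂ) * dv, -Complex.I * (b : ℂ) * dw]

/-- The operator `[α]e(d_t p_t + d_u p_u + d_v p_v + d_w p_w) = W(ℓ_α,δ) + W(−ℓ_α,δ)`. -/
def brB (b lam1 lam2 ct cu cv cw cl1 cl2 dt du dv dw : ℝ) : OpB :=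
  Wop (ellB b lam1 lam2 ct cu cv cw cl1 cl2) (deltaB b dt du dv dw)
    + Wop (fun x => -(ellB b lam1 lam2 ct cu cv cw cl1 cl2 x)) (deltaB b dt du dv dw)

/-- `K₁ = W(π(b_s(2λ₁−2t−2v) + b(u+w)), 0)`. -/
def K1 (b lam1 lam2 : ℝ) : OpB := Wop (ellB b lam1 lam2 (-2) 1 (-2) 1 2 0) 0

/-- `K₁⁻¹`, the multiplication operator with negated exponent. -/
def K1inv (b lam1 lam2 : ℝ) : OpB := Wop (ellB b lam1 lam2 2 (-1) 2 (-1) (-2) 0) 0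

/-- `K₂ = W(π(b(2λ₂−2u−2w) + b_s(2t+2v)), 0)`. -/
def K2 (b lam1 lam2 : ℝ) : OpB := Wop (ellB b lam1 lam2 2 (-2) 2 (-2) 0 2) 0

/-- `K₂⁻¹`, the multiplication operator with negated exponent. -/
def K2inv (b lam1 lam2 : ℝ) : OpB := Wop (ellB b lam1 lam2 (-2) 2 (-2) 2 0 (-2)) 0

/-- `e₁ = [t]e(−p_t−p_u+p_w) + [u−v]e(−p_u−p_v+p_w) + [v−w]e(−p_v)`. -/
def e1 (b lam1 lam2 : ℝ) : OpB :=
  brB b lam1 lam2 1 0 0 0 0 0 (-1) (-1) 0 1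
    + brB b lam1 lam2 0 1 (-1) 0 0 0 0 (-1) (-1) 1
    + brB b lam1 lam2 0 0 1 (-1) 0 0 0 0 (-1) 0

/-- `e₂ = [w]e(−p_w)`. -/
def e2 (b lam1 lam2 : ℝ) : OpB := brB b lam1 lam2 0 0 0 1 0 0 0 0 0 (-1)

/-- `f₁ = [2λ₁−t]e(p_t) + [2λ₁−2t+u−v]e(p_v)`. -/
def f1 (b lam1 lam2 : ℝ) : OpB :=
  brB b lam1 lam2 (-1) 0 0 0 2 0 1 0 0 0
    + brB b lam1 lam2 (-2) 1 (-1) 0 2 0 0 0 1 0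

/-- `f₂ = [2λ₂+2t−u]e(p_u) + [2λ₂+2t−2u+2v−w]e(p_w)`. -/
def f2 (b lam1 lam2 : ℝ) : OpB :=
  brB b lam1 lam2 2 (-1) 0 0 0 2 0 1 0 0
    + brB b lam1 lam2 2 (-2) 2 (-1) 0 2 0 0 0 1

/-- The B₂ Cartan matrix `a₁₁ = a₂₂ = 2, a₁₂ = −2, a₂₁ = −1`. -/
def aB : Fin 2 → Fin 2 → ℤ := ![![2, -2], ![-1, 2]]

/-- `q₁ = q_s`, `q₂ = q`. -/
def qi (b : ℝ) : Fin 2 → ℂ := ![qs b, qq b]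

/-- The pair of `e`-generators. -/
def eOp (b lam1 lam2 : ℝ) : Fin 2 → OpB := ![e1 b lam1 lam2, e2 b lam1 lam2]

/-- The pair of `f`-generators. -/
def fOp (b lam1 lam2 : ℝ) : Fin 2 → OpB := ![f1 b lam1 lam2, f2 b lam1 lam2]

/-- The pair of `K`-generators. -/
def KOp (b lam1 lam2 : ℝ) : Fin 2 → OpB := ![K1 b lam1 lam2, K2 b lam1 lam2]

/-- The pair of inverse `K`-generators. -/
def KinvOp (b lam1 lam2 : ℝ) : Fin 2 → OpB := ![K1inv b lam1 lam2, K2inv b lam1 lam2]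

/-- The scalar `s(m,n) = -π i (b_s² m + b² n)`. -/
def sval (b m n : ℝ) : ℂ :=
  -((Real.pi : ℂ) * Complex.I) * (((bs b : ℝ) : ℂ) ^ 2 * m + (b : ℂ) ^ 2 * n)

lemma bs_sq (b : ℝ) : (((bs b : ℝ) : ℂ)) ^ 2 = (b : ℂ) ^ 2 / 2 := by
  have h2 : (Real.sqrt 2 : ℝ) ^ 2 = 2 := Real.sq_sqrt (by norm_num)
  have hne : (Real.sqrt 2 : ℝ) ≠ 0 := by positivity
  rw [bs]
  push_cast
  rw [div_pow]
  norm_cast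
  rw [h2]

lemma ellB_shift (b lam1 lam2 ct cu cv cw cl1 cl2 dt du dv dw : ℝ) (m n : ℝ)
    (hm : ct * dt + cv * dv = m) (hn : cu * du + cw * dw = n) (x : Fin 4 → ℂ) :
    ellB b lam1 lam2 ct cu cv cw cl1 cl2 (x + deltaB b dt du dv dw)
      = ellB b lam1 lam2 ct cu cv cw cl1 cl2 x + sval b m n := by
  subst hm hn
  simp only [ellB, deltaB, sval, Pi.add_apply, Matrix.cons_val_zero, Matrix.cons_val_one,
    Matrix.head_cons, Matrix.cons_val_two, Matrix.tail_cons, Matrix.cons_val_three]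
  push_cast
  ring

/-- Commutation relation predicate: `K A = c • (A K)`. -/
def CommRel (K : OpB) (c : ℂ) (A : OpB) : Prop := K * A = c • (A * K)

lemma CommRel.add {K : OpB} {c : ℂ} {A B : OpB} (hA : CommRel K c A) (hB : CommRel K c B) :
    CommRel K c (A + B) := by
  unfold CommRel at *
  rw [mul_add, hA, hB, add_mul, smul_add]

lemma Wop_comm (ℓK ℓ : (Fin 4 → ℂ) → ℂ) (δ : Fin 4 → ℂ) (s : ℂ)
    (h : ∀ x, ℓK (x + δ) = ℓK x + s) :
    CommRel (Wop ℓK 0) (Complex.exp (-s)) (Wop ℓ δ) := by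
  unfold CommRel
  apply LinearMap.ext; intro f; funext x
  simp only [Module.End.mul_apply, LinearMap.smul_apply, Pi.smul_apply, smul_eq_mul, Wop,
    LinearMap.coe_mk, AddHom.coe_mk, smul_zero, add_zero]
  rw [h x, Complex.exp_add, Complex.exp_neg]
  have hs := Complex.exp_ne_zero s
  field_simp

lemma K_comm_brB (b lam1 lam2 ct cu cv cw cl1 cl2 ct' cu' cv' cw' cl1' cl2'
    dt du dv dw m n : ℝ) (hm : ct * dt + cv * dv = m) (hn : cu * du + cw * dw = n) :
    CommRel (Wop (ellB b lam1 lam2 ct cu cv cw cl1 cl2) 0)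
      (Complex.exp (-sval b m n))
      (brB b lam1 lam2 ct' cu' cv' cw' cl1' cl2' dt du dv dw) :=
  (Wop_comm _ _ _ _ (ellB_shift b lam1 lam2 ct cu cv cw cl1 cl2 dt du dv dw m n hm hn)).add
    (Wop_comm _ _ _ _ (ellB_shift b lam1 lam2 ct cu cv cw cl1 cl2 dt du dv dw m n hm hn))

lemma zpow_qs (b : ℝ) (m n : ℝ) (k : ℤ) (h : (k : ℝ) = m + 2 * n) :
    qs b ^ k = Complex.exp (-sval b m n) := by
  rw [qs, ← Complex.exp_int_mul]
  congr 1
  have hc : (k : ℂ) = (m : ℂ) + 2 * (n : ℂ) := by exact_mod_cast congrArg (Complex.ofReal ·) h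
  rw [sval, bs_sq]
  linear_combination ((Real.pi : ℂ) * Complex.I * (b : ℂ) ^ 2 / 2) * hc

lemma zpow_qq (b : ℝ) (m n : ℝ) (k : ℤ) (h : ((2 * k : ℤ) : ℝ) = m + 2 * n) :
    qq b ^ k = Complex.exp (-sval b m n) := by
  rw [qq, ← Complex.exp_int_mul]
  congr 1
  have hc : ((2 * k : ℤ) : ℂ) = (m : ℂ) + 2 * (n : ℂ) := by
    exact_mod_cast congrArg (Complex.ofReal ·) h
  rw [sval, bs_sq]
  push_cast at hc ⊢
  linear_combination ((Real.pi : ℂ) * Complex.I * (b : ℂ) ^ 2 / 2) * hc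

/-- `K_i e_j = q_i^{a_ij} e_j K_i` and `K_i f_j = q_i^{−a_ij} f_j K_i`
for the type-B₂ positive representation corresponding to `w₀ = s₁s₂s₁s₂`. -/
theorem B2_K_relations (b lam1 lam2 : ℝ) (hb0 : 0 < b) (hb1 : b < 1)
    (hirr : Irrational (b ^ 2)) : ∀ i j : Fin 2,
    KOp b lam1 lam2 i * eOp b lam1 lam2 j
      = (qi b i ^ (aB i j)) • (eOp b lam1 lam2 j * KOp b lam1 lam2 i) ∧
    KOp b lam1 lam2 i * fOp b lam1 lam2 j
      = (qi b i ^ (-(aB i j))) • (fOp b lam1 lam2 j * KOp b lam1 lam2 i) := by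
  intro i j
  fin_cases i <;> fin_cases j <;>
    refine ⟨?_, ?_⟩ <;>
    simp only [KOp, eOp, fOp, qi, aB, Fin.isValue, Fin.mk_zero, Fin.mk_one, Matrix.cons_val_zero, Matrix.cons_val_one,
      Matrix.head_cons, Int.reduceNeg, neg_neg]
  · -- K1 e1 : qs^2
    rw [zpow_qs b 2 0 2 (by norm_num)]
    exact ((K_comm_brB b lam1 lam2 (-2) 1 (-2) 1 2 0  1 0 0 0 0 0  (-1) (-1) 0 1  2 0
        (by norm_num) (by norm_num)).add
      (K_comm_brB b lam1 lam2 (-2) 1 (-2) 1 2 0  0 1 (-1) 0 0 0  0 (-1) (-1) 1  2 0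
        (by norm_num) (by norm_num))).add
      (K_comm_brB b lam1 lam2 (-2) 1 (-2) 1 2 0  0 0 1 (-1) 0 0  0 0 (-1) 0  2 0
        (by norm_num) (by norm_num))
  · -- K1 f1 : qs^{-2}
    rw [zpow_qs b (-2) 0 (-2) (by norm_num)]
    exact (K_comm_brB b lam1 lam2 (-2) 1 (-2) 1 2 0  (-1) 0 0 0 2 0  1 0 0 0  (-2) 0
        (by norm_num) (by norm_num)).add
      (K_comm_brB b lam1 lam2 (-2) 1 (-2) 1 2 0  (-2) 1 (-1) 0 2 0  0 0 1 0  (-2) 0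
        (by norm_num) (by norm_num))
  · -- K1 e2 : qs^{-2}
    rw [zpow_qs b 0 (-1) (-2) (by norm_num)]
    exact K_comm_brB b lam1 lam2 (-2) 1 (-2) 1 2 0  0 0 0 1 0 0  0 0 0 (-1)  0 (-1)
        (by norm_num) (by norm_num)
  · -- K1 f2 : qs^2
    rw [zpow_qs b 0 1 2 (by norm_num)]
    exact (K_comm_brB b lam1 lam2 (-2) 1 (-2) 1 2 0  2 (-1) 0 0 0 2  0 1 0 0  0 1
        (by norm_num) (by norm_num)).add
      (K_comm_brB b lam1 lam2 (-2) 1 (-2) 1 2 0  2 (-2) 2 (-1) 0 2  0 0 0 1  0 1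
        (by norm_num) (by norm_num))
  · -- K2 e1 : qq^{-1}
    rw [zpow_qq b (-2) 0 (-1) (by norm_num)]
    exact ((K_comm_brB b lam1 lam2 2 (-2) 2 (-2) 0 2  1 0 0 0 0 0  (-1) (-1) 0 1  (-2) 0
        (by norm_num) (by norm_num)).add
      (K_comm_brB b lam1 lam2 2 (-2) 2 (-2) 0 2  0 1 (-1) 0 0 0  0 (-1) (-1) 1  (-2) 0
        (by norm_num) (by norm_num))).add
      (K_comm_brB b lam1 lam2 2 (-2) 2 (-2) 0 2  0 0 1 (-1) 0 0  0 0 (-1) 0  (-2) 0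
        (by norm_num) (by norm_num))
  · -- K2 f1 : qq^1
    rw [zpow_qq b 2 0 1 (by norm_num)]
    exact (K_comm_brB b lam1 lam2 2 (-2) 2 (-2) 0 2  (-1) 0 0 0 2 0  1 0 0 0  2 0
        (by norm_num) (by norm_num)).add
      (K_comm_brB b lam1 lam2 2 (-2) 2 (-2) 0 2  (-2) 1 (-1) 0 2 0  0 0 1 0  2 0
        (by norm_num) (by norm_num))
  · -- K2 e2 : qq^2
    rw [zpow_qq b 0 2 2 (by norm_num)]
    exact K_comm_brB b lam1 lam2 2 (-2) 2 (-2) 0 2  0 0 0 1 0 0  0 0 0 (-1)  0 2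
        (by norm_num) (by norm_num)
  · -- K2 f2 : qq^{-2}
    rw [zpow_qq b 0 (-2) (-2) (by norm_num)]
    exact (K_comm_brB b lam1 lam2 2 (-2) 2 (-2) 0 2  2 (-1) 0 0 0 2  0 1 0 0  0 (-2)
        (by norm_num) (by norm_num)).add
      (K_comm_brB b lam1 lam2 2 (-2) 2 (-2) 0 2  2 (-2) 2 (-1) 0 2  0 0 0 1  0 (-2)
        (by norm_num) (by norm_num))

end
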